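/- arXiv:math/0511227 — 2 statements merged into one kernel-verified Lean document; each statement's English description precedes it below -/
import Mathlib

section
/- In the nonstandard algebra Ω(n) over an algebraically closed field of characteristic 2, the element α² = αβ_1⋯β_n is nonzero and does not lie in the commutator subspace K(Ω(n)); consequently α ∉ T_1(Ω(n)). -/
/-! The nonstandard domestic symmetric algebra `Ω(n)`, presented as the quotient of
the free algebra on the arrows and trivial paths of the quiver `Δ(1,n)` by the
path-algebra relations together with the defining bound quiver relations. -/

/-- Generators: trivial paths `e i` at the `n` vertices, the loop `a = α` at vertex
`0`, and the arrows `b i = β_{i+1} : i → i+1 (mod n)`. -/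
inductive DeltaGen (n : ℕ) : Type
  | e : Fin n → DeltaGen n
  | a : DeltaGen n
  | b : Fin n → DeltaGen n

variable (K : Type*) [Field K] (n : ℕ) [NeZero n]

open FreeAlgebra

abbrev FA := FreeAlgebra K (DeltaGen n)

def ge (i : Fin n) : FA K n := ι K (DeltaGen.e i)
def ga : FA K n := ι K DeltaGen.a
def gb (i : Fin n) : FA K n := ι K (DeltaGen.b i)

/-- `bprod K n lo hi` is the path `β_{lo+1} β_{lo+2} ⋯ β_{hi}`
(product of the `b i` for `lo ≤ i < hi`, indices taken mod `n`). -/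
def bprod (lo hi : ℕ) : FA K n :=
  ((List.range' lo (hi - lo)).map fun i =>
    gb K n ⟨i % n, Nat.mod_lt i (Nat.pos_of_ne_zero (NeZero.ne n))⟩).prod

/-- The path-algebra relations of the quiver `Δ(1,n)`: the `e i` are orthogonal
idempotents summing to `1`, `α` is a loop at vertex `0`, and `β_{i+1}` is an arrow
from vertex `i` to vertex `i+1`. -/
def quiverRels : Set (FA K n) :=
  {x | ∃ i j : Fin n, x = ge K n i * ge K n j - if i = j then ge K n i else 0} ∪
  {(∑ i : Fin n, ge K n i) - 1} ∪
  {ge K n 0 * ga K n - ga K n, ga K n * ge K n 0 - ga K n} ∪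
  {x | ∃ i : Fin n, x = ge K n i * gb K n i - gb K n i} ∪
  {x | ∃ i : Fin n, x = gb K n i * ge K n (i + 1) - gb K n i}

/-- The defining relations of `Ω(n)`:
`αβ₁⋯βₙ + β₁⋯βₙα = 0`, `α² = αβ₁⋯βₙ`, `βₙβ₁ = 0`, and
`β_j⋯β_n α β_1⋯β_j = 0` for `2 ≤ j ≤ n-1`. -/
def omegaRels : Set (FA K n) :=
  quiverRels K n ∪
  {ga K n * bprod K n 0 n + bprod K n 0 n * ga K n,
   ga K n ^ 2 - ga K n * bprod K n 0 n,
   bprod K n (n - 1) n * bprod K n 0 1} ∪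
  {x | ∃ j : ℕ, 2 ≤ j ∧ j ≤ n - 1 ∧
        x = bprod K n (j - 1) n * ga K n * bprod K n 0 j}

def OmegaRel (x y : FA K n) : Prop := x ∈ omegaRels K n ∧ y = 0

/-- The algebra `Ω(n)`. -/
abbrev Omega := RingQuot (OmegaRel K n)

noncomputable def omegaPi : FA K n →ₐ[K] Omega K n := RingQuot.mkAlgHom K _

/-- The commutator subspace `K(Λ)` of an algebra `Λ`. -/
def commutatorSubspace (Λ : Type*) [Ring Λ] [Algebra K Λ] : Submodule K Λ :=
  Submodule.span K {x : Λ | ∃ a b : Λ, x = a * b - b * a}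


deriving instance DecidableEq for DeltaGen

namespace OmegaAux

open List DeltaGen

variable {n : ℕ}

def isE : DeltaGen n → Bool
  | .e _ => true
  | .a => false
  | .b _ => false

def core (w : List (DeltaGen n)) : List (DeltaGen n) := w.filter fun x => !isE x

@[simp] lemma core_append (u v : List (DeltaGen n)) : core (u ++ v) = core u ++ core v :=
  List.filter_append _ _

abbrev St (n : ℕ) := Option (Option (Fin n × Fin n))

def comp : St n → St n → St n
  | none, _ => none
  | some none, s => s
  | some (some _), none => none
  | some (some p), some none => some (some p)
  | some (some p), some (some q) => if p.2 = q.1 then some (some (p.1, q.2)) else none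

@[simp] lemma comp_none_left (s : St n) : comp none s = none := rfl
@[simp] lemma comp_none_right (s : St n) : comp s none = none := by
  rcases s with _ | (_ | p) <;> rfl
@[simp] lemma comp_one_left (s : St n) : comp (some none) s = s := rfl
@[simp] lemma comp_one_right (s : St n) : comp s (some none) = s := by
  rcases s with _ | (_ | p) <;> rfl

lemma comp_assoc (s t u : St n) : comp (comp s t) u = comp s (comp t u) := by
  rcases s with _ | (_ | ⟨i, j⟩) <;> rcases t with _ | (_ | ⟨k, l⟩) <;>
    rcases u with _ | (_ | ⟨p, q⟩) <;> simp [comp] <;>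
    split_ifs <;> simp_all [comp]

variable [NeZero n]

def Lv : DeltaGen n → Fin n
  | .e i => i
  | .a => 0
  | .b i => i

def Rv : DeltaGen n → Fin n
  | .e i => i
  | .a => 0
  | .b i => i + 1

def unit (x : DeltaGen n) : St n := some (some (Lv x, Rv x))

def seg (w : List (DeltaGen n)) : St n := w.foldr (fun x s => comp (unit x) s) (some none)

@[simp] lemma seg_nil : seg ([] : List (DeltaGen n)) = some none := rfl

@[simp] lemma seg_cons (x : DeltaGen n) (w : List (DeltaGen n)) :
    seg (x :: w) = comp (unit x) (seg w) := rfl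

lemma seg_append (u v : List (DeltaGen n)) : seg (u ++ v) = comp (seg u) (seg v) := by
  induction u with
  | nil => simp
  | cons x t ih => simp [ih, comp_assoc]

@[simp] lemma seg_single (x : DeltaGen n) : seg [x] = unit x := by simp

lemma seg_eq_one_iff {w : List (DeltaGen n)} (h : seg w = some none) : w = [] := by
  cases w with
  | nil => rfl
  | cons x t =>
    exfalso
    rw [seg_cons, unit] at h
    rcases hst : seg t with _ | (_ | p) <;> rw [hst] at h
    · simp [comp] at h
    · simp [comp] at h
    · simp only [comp] at h
      split_ifs at h <;> simp at h

def cohSt : St n → Prop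
  | none => False
  | some none => True
  | some (some p) => p.1 = p.2



def bfun (i : ℕ) : DeltaGen n := .b ⟨i % n, Nat.mod_lt i (Nat.pos_of_ne_zero (NeZero.ne n))⟩

def bList (lo hi : ℕ) : List (DeltaGen n) := (List.range' lo (hi - lo)).map bfun

def WB : List (DeltaGen n) := bList 0 n

def Wstar : List (DeltaGen n) := .a :: WB

def Sp (m : List (DeltaGen n)) : Prop :=
  m ~r [DeltaGen.a, DeltaGen.a] ∨ m ~r Wstar

lemma Sp_congr {l l' : List (DeltaGen n)} (h : l ~r l') : Sp l ↔ Sp l' :=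
  or_congr ⟨fun h2 => h.symm.trans h2, fun h2 => h.trans h2⟩
    ⟨fun h2 => h.symm.trans h2, fun h2 => h.trans h2⟩

@[simp] lemma core_cons_e (i : Fin n) (w : List (DeltaGen n)) :
    core (DeltaGen.e i :: w) = core w := by simp [core, isE]

@[simp] lemma core_cons_a (w : List (DeltaGen n)) :
    core (DeltaGen.a :: w) = DeltaGen.a :: core w := by simp [core, isE]

@[simp] lemma core_cons_b (i : Fin n) (w : List (DeltaGen n)) :
    core (DeltaGen.b i :: w) = DeltaGen.b i :: core w := by simp [core, isE]

@[simp] lemma core_nil : core ([] : List (DeltaGen n)) = [] := rfl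

lemma core_bList (lo hi : ℕ) : core (bList (n := n) lo hi) = bList lo hi := by
  rw [core, List.filter_eq_self]
  intro x hx
  rcases List.mem_map.1 hx with ⟨i, _, rfl⟩
  simp [bfun, isE]

@[simp] lemma length_bList (lo hi : ℕ) : (bList (n := n) lo hi).length = hi - lo := by
  simp [bList]

lemma length_WB : (WB (n := n)).length = n := by simp [WB]

lemma length_Wstar : (Wstar (n := n)).length = n + 1 := by simp [Wstar, length_WB]

lemma b_zero_mem_WB : bfun 0 ∈ (WB (n := n)) := by
  have hn : 0 < n := Nat.pos_of_ne_zero (NeZero.ne n)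
  exact List.mem_map.2 ⟨0, List.mem_range'.2 ⟨0, hn, by simp⟩, rfl⟩

lemma a_not_mem_WB : DeltaGen.a ∉ (WB (n := n)) := by
  intro h
  rcases List.mem_map.1 h with ⟨i, _, hi⟩
  simp [bfun] at hi

lemma count_a_Wstar : List.count DeltaGen.a (Wstar (n := n)) = 1 := by
  classical
  simp [Wstar, List.count_cons, List.count_eq_zero.2 a_not_mem_WB]

lemma nodup_WB : (WB (n := n)).Nodup := by
  refine List.Nodup.map_on ?_ ?_
  · intro i hi j hj hij
    rw [List.mem_range'] at hi hj
    obtain ⟨i', hi', rfl⟩ := hi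
    obtain ⟨j', hj', rfl⟩ := hj
    simp only [bfun, DeltaGen.b.injEq, Fin.mk.injEq] at hij
    rw [Nat.mod_eq_of_lt (by omega), Nat.mod_eq_of_lt (by omega)] at hij
    omega
  · exact List.nodup_range' _ Nat.one_pos

lemma count_bfun_Wstar_le_one (i : ℕ) :
    List.count (bfun i) (Wstar (n := n)) ≤ 1 := by
  classical
  have : List.count (bfun i) (WB (n := n)) ≤ 1 :=
    List.nodup_iff_count_le_one.1 nodup_WB _
  simpa [Wstar, List.count_cons, bfun] using this

section Field

variable (K : Type*) [Field K]

open Classical in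
noncomputable def gfun (w : List (DeltaGen n)) : K :=
  if cohSt (seg w) ∧ Sp (core w) then 1 else 0

lemma gfun_congr {u v : List (DeltaGen n)} (h1 : seg u = seg v) (h2 : core u = core v)
    (w : List (DeltaGen n)) : gfun (n := n) K (w ++ u) = gfun K (w ++ v) := by
  unfold gfun
  rw [seg_append, seg_append, h1, core_append, core_append, h2]

lemma gfun_zero_of_seg_none {u : List (DeltaGen n)} (h : seg u = none)
    (w : List (DeltaGen n)) : gfun (n := n) K (w ++ u) = 0 := by
  unfold gfun
  rw [seg_append, h, comp_none_right]
  simp [cohSt]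

lemma cohSt_comp_comm (p : Fin n × Fin n) (s : St n) :
    cohSt (comp (some (some p)) s) ↔ cohSt (comp s (some (some p))) := by
  rcases s with _ | (_ | ⟨q1, q2⟩)
  · simp [comp, cohSt]
  · simp [comp]
  · rcases p with ⟨p1, p2⟩
    by_cases h1 : p2 = q1 <;> by_cases h2 : q2 = p1
    · subst h1; subst h2; simp [comp, cohSt]
      try (constructor <;> (intro hh; exact hh.symm))
    · simp [comp, cohSt, h1, h2]
      exact fun hh => h2 hh.symm
    · simp [comp, cohSt, h1, h2]
      exact fun hh => h1 hh.symm
    · simp [comp, cohSt, h1, h2]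

lemma gfun_rot_one (x : DeltaGen n) (w : List (DeltaGen n)) :
    gfun (n := n) K (x :: w) = gfun K (w ++ [x]) := by
  classical
  unfold gfun
  have hseg : cohSt (seg (x :: w)) ↔ cohSt (seg (w ++ [x])) := by
    rw [seg_cons, seg_append, seg_single, unit]
    exact cohSt_comp_comm _ _
  have hsp : Sp (core (x :: w)) ↔ Sp (core (w ++ [x])) := by
    cases x with
    | e i => simp [core_append]
    | a =>
      rw [core_cons_a, core_append]
      exact Sp_congr (isRotated_concat _ _).symm
    | b i =>
      rw [core_cons_b, core_append]
      exact Sp_congr (isRotated_concat _ _).symm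
  exact if_congr (and_congr hseg hsp) rfl rfl

lemma gfun_rot (u v : List (DeltaGen n)) :
    gfun (n := n) K (u ++ v) = gfun K (v ++ u) := by
  induction u generalizing v with
  | nil => simp only [List.nil_append, List.append_nil]
  | cons x t ih =>
    calc gfun (n := n) K ((x :: t) ++ v) = gfun K (x :: (t ++ v)) := by simp
    _ = gfun K ((t ++ v) ++ [x]) := gfun_rot_one K x (t ++ v)
    _ = gfun K (t ++ (v ++ [x])) := by simp
    _ = gfun K ((v ++ [x]) ++ t) := ih _
    _ = gfun K (v ++ (x :: t)) := by simp

end Field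

@[simp] lemma unit_e (i : Fin n) : unit (DeltaGen.e i) = some (some (i, i)) := rfl
@[simp] lemma unit_a : unit (DeltaGen.a : DeltaGen n) = some (some (0, 0)) := rfl
@[simp] lemma unit_b (i : Fin n) : unit (DeltaGen.b i) = some (some (i, i + 1)) := rfl

lemma Sp_nil : ¬ Sp ([] : List (DeltaGen n)) := by
  rintro (h | h)
  · have := h.perm.length_eq; simp at this
  · have := h.perm.length_eq; rw [length_Wstar] at this; simp at this

lemma fin_mk_add_one (m : ℕ) (h : m < n) :
    (⟨m % n, Nat.mod_lt m (Nat.pos_of_ne_zero (NeZero.ne n))⟩ : Fin n) + 1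
      = ⟨(m + 1) % n, Nat.mod_lt _ (Nat.pos_of_ne_zero (NeZero.ne n))⟩ := by
  apply Fin.ext
  simp only [Fin.val_add, Fin.val_one']
  rcases Nat.lt_or_ge 1 n with h1 | h1
  · rw [Nat.mod_eq_of_lt h1, Nat.mod_eq_of_lt h]
  · have hn1 : n = 1 := by
      have := Nat.pos_of_ne_zero (NeZero.ne n); omega
    subst hn1
    simp [Nat.mod_one]

lemma seg_bList : ∀ len lo, 0 < len → lo + len ≤ n →
    seg (bList (n := n) lo (lo + len)) = some (some
      (⟨lo % n, Nat.mod_lt lo (Nat.pos_of_ne_zero (NeZero.ne n))⟩,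
       ⟨(lo + len) % n, Nat.mod_lt _ (Nat.pos_of_ne_zero (NeZero.ne n))⟩)) := by
  intro len
  induction len with
  | zero => omega
  | succ len ih =>
    intro lo _ hle
    rcases Nat.eq_zero_or_pos len with rfl | hpos
    · have : bList (n := n) lo (lo + 1) = [bfun lo] := by
        simp [bList, List.range'_succ]
      rw [this, seg_single]
      simp only [bfun, unit, Lv, Rv]
      try rw [fin_mk_add_one lo (by omega)]

    · have hsplit : bList (n := n) lo (lo + (len + 1)) = bfun lo :: bList (lo + 1) (lo + 1 + len) := by
        simp only [bList, Nat.add_sub_cancel_left]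
        rw [List.range'_succ]
        simp
      rw [hsplit, seg_cons, ih (lo + 1) hpos (by omega)]
      simp only [bfun, unit, Lv, Rv, comp]
      rw [fin_mk_add_one lo (by omega), if_pos rfl]
      have harith : lo + 1 + len = lo + (len + 1) := by omega
      simp only [harith]

lemma seg_WB : seg (WB (n := n)) = some (some (0, 0)) := by
  have hn : 0 < n := Nat.pos_of_ne_zero (NeZero.ne n)
  have := seg_bList (n := n) n 0 hn (by omega)
  simp only [Nat.zero_add] at this
  rw [WB, this]
  simp [Prod.ext_iff, Fin.ext_iff, Nat.mod_self]

lemma seg_aWB : seg (DeltaGen.a :: WB (n := n)) = some (some (0, 0)) := by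
  rw [seg_cons, seg_WB, unit_a]
  simp [comp]

lemma seg_WBa : seg (WB (n := n) ++ [DeltaGen.a]) = some (some (0, 0)) := by
  rw [seg_append, seg_WB, seg_single, unit_a]
  simp [comp]

lemma seg_aa : seg ([DeltaGen.a, DeltaGen.a] : List (DeltaGen n)) = some (some (0, 0)) := by
  simp [comp]

lemma core_WB : core (WB (n := n)) = WB := core_bList 0 n

lemma Sp_a_WB (m : List (DeltaGen n)) : Sp (m ++ (DeltaGen.a :: WB)) ↔ m = [] := by
  classical
  constructor
  · rintro (h | h)
    · exfalso
      have hc := h.perm.count_eq (bfun 0)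
      rw [List.count_append] at hc
      have h1 : List.count (bfun (n := n) 0) (DeltaGen.a :: WB) ≠ 0 := by
        rw [Ne, List.count_eq_zero]
        intro hm
        exact hm (List.mem_cons_of_mem _ b_zero_mem_WB)
      have h2 : List.count (bfun (n := n) 0) [DeltaGen.a, DeltaGen.a] = 0 := by
        simp [bfun]
      omega
    · have hl := h.perm.length_eq
      rw [List.length_append, length_Wstar] at hl
      have h3 : (DeltaGen.a :: WB (n := n)).length = n + 1 := length_Wstar
      exact List.length_eq_zero_iff.1 (by omega)
  · rintro rfl
    exact Or.inr (by rw [List.nil_append]; exact IsRotated.refl _)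

lemma Sp_WB_a (m : List (DeltaGen n)) : Sp (m ++ (WB ++ [DeltaGen.a])) ↔ m = [] := by
  classical
  constructor
  · rintro (h | h)
    · exfalso
      have hc := h.perm.count_eq (bfun 0)
      rw [List.count_append] at hc
      have h1 : List.count (bfun (n := n) 0) (WB ++ [DeltaGen.a]) ≠ 0 := by
        rw [Ne, List.count_eq_zero]
        intro hm
        exact hm (List.mem_append.2 (Or.inl b_zero_mem_WB))
      have h2 : List.count (bfun (n := n) 0) [DeltaGen.a, DeltaGen.a] = 0 := by
        simp [bfun]
      omega
    · have hl := h.perm.length_eq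
      rw [List.length_append, length_Wstar] at hl
      have h3 : (WB (n := n) ++ [DeltaGen.a]).length = n + 1 := by
        rw [List.length_append, length_WB]; rfl
      exact List.length_eq_zero_iff.1 (by omega)
  · rintro rfl
    rw [List.nil_append]
    exact Or.inr (isRotated_concat _ _)

lemma Sp_aa (m : List (DeltaGen n)) : Sp (m ++ [DeltaGen.a, DeltaGen.a]) ↔ m = [] := by
  classical
  constructor
  · rintro (h | h)
    · have hl := h.perm.length_eq
      rw [List.length_append] at hl
      simpa using hl
    · exfalso
      have hc := h.perm.count_eq DeltaGen.a
      rw [List.count_append, count_a_Wstar] at hc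
      have h2 : List.count (DeltaGen.a : DeltaGen n) [DeltaGen.a, DeltaGen.a] = 2 := by
        simp
      omega
  · rintro rfl
    exact Or.inl (IsRotated.refl _)

section Field2

variable (K : Type*) [Field K]

lemma gfun_sum_e (w : List (DeltaGen n)) :
    ∑ i : Fin n, gfun (n := n) K (w ++ [DeltaGen.e i]) = gfun K w := by
  classical
  rcases hs : seg w with _ | (_ | ⟨p, q⟩)
  · have hz : ∀ i : Fin n, gfun (n := n) K (w ++ [DeltaGen.e i]) = 0 := by
      intro i
      unfold gfun
      rw [seg_append, hs, comp_none_left]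
      simp [cohSt]
    rw [Finset.sum_congr rfl fun i _ => hz i]
    unfold gfun
    rw [hs]
    simp [cohSt]
  · have hw : w = [] := seg_eq_one_iff hs
    subst hw
    have hz : ∀ i : Fin n, gfun (n := n) K ([] ++ [DeltaGen.e i]) = 0 := by
      intro i
      unfold gfun
      rw [if_neg]
      rintro ⟨-, hsp⟩
      exact Sp_nil (by simpa using hsp)
    rw [Finset.sum_congr rfl fun i _ => hz i]
    unfold gfun
    rw [if_neg]
    · simp
    · rintro ⟨-, hsp⟩
      exact Sp_nil (by simpa using hsp)
  · have hterm : ∀ i : Fin n, gfun (n := n) K (w ++ [DeltaGen.e i])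
        = if i = q then gfun K w else 0 := by
      intro i
      by_cases hiq : i = q
      · subst hiq
        have h1 : seg (w ++ [DeltaGen.e i]) = some (some (p, i)) := by
          rw [seg_append, hs, seg_single, unit_e]
          simp [comp]
        unfold gfun
        have hce : core ([DeltaGen.e i] : List (DeltaGen n)) = [] := by simp
        rw [h1, hs, core_append, hce, List.append_nil]
        simp
      · have h1 : seg (w ++ [DeltaGen.e i]) = none := by
          rw [seg_append, hs, seg_single, unit_e]
          simp only [comp]
          rw [if_neg (fun hh => hiq hh.symm)]
        unfold gfun
        rw [h1, if_neg hiq, if_neg]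
        rintro ⟨hc, -⟩
        exact hc
    rw [Finset.sum_congr rfl fun i _ => hterm i, Finset.sum_ite_eq' Finset.univ q,
      if_pos (Finset.mem_univ q)]

lemma gfun_aWB_eq_WBa (w : List (DeltaGen n)) :
    gfun (n := n) K (w ++ (DeltaGen.a :: WB)) = gfun K (w ++ (WB ++ [DeltaGen.a])) := by
  classical
  unfold gfun
  rw [seg_append, seg_append, seg_aWB, seg_WBa, core_append, core_append]
  apply if_congr (and_congr Iff.rfl ?_) rfl rfl
  have hc1 : core (DeltaGen.a :: WB (n := n)) = DeltaGen.a :: WB := by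
    rw [core_cons_a, core_WB]
  have hc2 : core (WB (n := n) ++ [DeltaGen.a]) = WB ++ [DeltaGen.a] := by
    rw [core_append, core_WB, core_cons_a, core_nil]
  rw [hc1, hc2, Sp_a_WB, Sp_WB_a]

lemma gfun_aa_eq_aWB (w : List (DeltaGen n)) :
    gfun (n := n) K (w ++ [DeltaGen.a, DeltaGen.a]) = gfun K (w ++ (DeltaGen.a :: WB)) := by
  classical
  unfold gfun
  rw [seg_append, seg_append, seg_aa, seg_aWB, core_append, core_append]
  apply if_congr (and_congr Iff.rfl ?_) rfl rfl
  have hc1 : core ([DeltaGen.a, DeltaGen.a] : List (DeltaGen n)) = [DeltaGen.a, DeltaGen.a] := by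
    simp
  have hc2 : core (DeltaGen.a :: WB (n := n)) = DeltaGen.a :: WB := by
    rw [core_cons_a, core_WB]
  rw [hc1, hc2, Sp_aa, Sp_a_WB]

lemma WB_getElem (q : ℕ) (hq : q < n) :
    (WB (n := n))[q]'(by rw [length_WB]; exact hq) = bfun q := by
  simp only [WB, bList, Nat.sub_zero]
  rw [List.getElem_map]
  congr 1
  rw [List.getElem_range']
  omega

lemma Wstar_getElem (p : ℕ) (hp : p < n + 1) :
    (Wstar (n := n))[p]'(by rw [length_Wstar]; exact hp) =
      if p = 0 then DeltaGen.a else bfun (p - 1) := by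
  rcases p with _ | q
  · simp [Wstar]
  · rw [if_neg (by omega)]
    have hq : q < n := by omega
    exact (List.getElem_cons_succ DeltaGen.a WB q
      (by rw [show (DeltaGen.a :: WB (n := n)).length = n + 1 from length_Wstar]; omega)).trans
      (WB_getElem q hq)

lemma mod_pred {L M : ℕ} (h : (M + 1) % L = 1) : M % L = 0 := by
  rcases Nat.eq_zero_or_pos L with rfl | hL
  · simp only [Nat.mod_zero] at h ⊢
    omega
  have h2 : (M % L + 1) % L = 1 := by rw [Nat.mod_add_mod, h]
  have hr : M % L < L := Nat.mod_lt _ hL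
  by_cases hc : M % L + 1 < L
  · rw [Nat.mod_eq_of_lt hc] at h2; omega
  · have he : M % L + 1 = L := by omega
    rw [he, Nat.mod_self] at h2; omega

lemma gfun_bnb0 (K : Type*) [Field K] (w : List (DeltaGen n)) :
    gfun (n := n) K (w ++ [bfun (n - 1), bfun 0]) = 0 := by
  classical
  have hn1 : 1 ≤ n := Nat.pos_of_ne_zero (NeZero.ne n)
  unfold gfun
  rw [if_neg]
  rintro ⟨-, hsp⟩
  have hcc : core ([bfun (n-1), bfun 0] : List (DeltaGen n)) = [bfun (n-1), bfun 0] := by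
    simp [bfun]
  rw [core_append, hcc] at hsp
  rcases hsp with h | h
  · have hc := h.perm.count_eq (bfun 0)
    rw [List.count_append] at hc
    have h1 : 0 < List.count (bfun (n := n) 0) [bfun (n := n) (n-1), bfun 0] :=
      List.count_pos_iff.2 (by simp)
    have h2 : List.count (bfun (n := n) 0) [DeltaGen.a, DeltaGen.a] = 0 := by
      simp [bfun]
    omega
  · have hlen : (core w).length + 2 = n + 1 := by
      have := h.perm.length_eq
      simp only [List.length_append, length_Wstar, List.length_cons,
        List.length_nil] at this
      omega
    obtain ⟨k, hk, hrot⟩ := isRotated_iff_mod.1 h.symm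
    have hlr : ∀ i, i < n + 1 → i < ((Wstar (n := n)).rotate k).length := by
      intro i hi
      rw [List.length_rotate, length_Wstar]
      exact hi
    have hget1 : ((Wstar (n := n)).rotate k)[(core w).length]'(hlr _ (by omega))
        = bfun (n-1) := by
      rw [List.getElem_of_eq hrot, List.getElem_append_right (le_refl (core w).length)]
      simp
    have hget2 : ((Wstar (n := n)).rotate k)[(core w).length + 1]'(hlr _ (by omega))
        = bfun 0 := by
      rw [List.getElem_of_eq hrot, List.getElem_append_right (by omega)]
      simp
    rw [List.getElem_rotate] at hget1 hget2
    simp only [length_Wstar] at hget1 hget2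
    rw [Wstar_getElem (((core w).length + k) % (n + 1)) (Nat.mod_lt _ (Nat.succ_pos n))] at hget1
    rw [Wstar_getElem (((core w).length + 1 + k) % (n + 1)) (Nat.mod_lt _ (Nat.succ_pos n))] at hget2
    have hp2 : ((core w).length + 1 + k) % (n + 1) = 1 := by
      by_cases hz : ((core w).length + 1 + k) % (n + 1) = 0
      · rw [if_pos hz] at hget2
        simp [bfun] at hget2
      · rw [if_neg hz] at hget2
        simp only [bfun, DeltaGen.b.injEq, Fin.mk.injEq] at hget2
        have hb1 : ((core w).length + 1 + k) % (n + 1) < n + 1 := Nat.mod_lt _ (by omega)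
        rw [Nat.mod_eq_of_lt (show ((core w).length + 1 + k) % (n + 1) - 1 < n by omega),
          Nat.mod_eq_of_lt (show 0 < n by omega)] at hget2
        omega
    have hp1 : ((core w).length + k) % (n + 1) = 0 := by
      apply mod_pred
      have : (core w).length + k + 1 = (core w).length + 1 + k := by omega
      rw [this]
      exact hp2
    rw [if_pos hp1] at hget1
    simp [bfun] at hget1

lemma gfun_middle (K : Type*) [Field K] (w : List (DeltaGen n)) (j : ℕ)
    (hj2 : 2 ≤ j) (hjn : j ≤ n - 1) :
    gfun (n := n) K (w ++ (bList (j-1) n ++ (DeltaGen.a :: bList 0 j))) = 0 := by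
  classical
  have hn1 : 1 ≤ n := Nat.pos_of_ne_zero (NeZero.ne n)
  have hn3 : 3 ≤ n := by omega
  unfold gfun
  rw [if_neg]
  rintro ⟨-, hsp⟩
  set β : DeltaGen n := bfun (j - 1) with hβ
  have hmem1 : β ∈ bList (n := n) (j-1) n :=
    List.mem_map.2 ⟨j-1, List.mem_range'.2 ⟨0, by omega, by omega⟩, rfl⟩
  have hmem2 : β ∈ bList (n := n) 0 j :=
    List.mem_map.2 ⟨j-1, List.mem_range'.2 ⟨j-1, by omega, by omega⟩, rfl⟩
  have hcore : core (bList (n := n) (j-1) n ++ (DeltaGen.a :: bList 0 j))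
      = bList (j-1) n ++ (DeltaGen.a :: bList 0 j) := by
    rw [core_append, core_bList, core_cons_a, core_bList]
  rw [core_append, hcore] at hsp
  have c1 : 0 < List.count β (bList (n := n) (j-1) n) := List.count_pos_iff.2 hmem1
  have c2 : 0 < List.count β (bList (n := n) 0 j) := List.count_pos_iff.2 hmem2
  have hcnt : 2 ≤ List.count β (core w ++ (bList (n := n) (j-1) n ++ (DeltaGen.a :: bList 0 j))) := by
    rw [List.count_append, List.count_append, List.count_cons]
    omega
  rcases hsp with h | h
  · have hc := h.perm.count_eq β
    have hz : List.count β [DeltaGen.a, DeltaGen.a] = 0 := by simp [hβ, bfun]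
    omega
  · have hc := h.perm.count_eq β
    have hle := count_bfun_Wstar_le_one (n := n) (j-1)
    rw [← hβ] at hle
    omega


lemma gfun_aa_val : gfun (n := n) K [DeltaGen.a, DeltaGen.a] = 1 := by
  classical
  unfold gfun
  rw [if_pos]
  constructor
  · rw [seg_aa]; rfl
  · have : core ([DeltaGen.a, DeltaGen.a] : List (DeltaGen n)) = [DeltaGen.a, DeltaGen.a] := by
      simp
    rw [this]
    exact Or.inl (IsRotated.refl _)

end Field2

end OmegaAux


namespace OmegaTau

open OmegaAux FreeAlgebra

variable (K : Type*) [Field K] (n : ℕ) [NeZero n]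

noncomputable def P (w : List (DeltaGen n)) : FA K n := (w.map (ι K)).prod

lemma P_append (u v : List (DeltaGen n)) : P K n (u ++ v) = P K n u * P K n v := by
  simp [P]

lemma P_singleton (x : DeltaGen n) : P K n [x] = ι K x := by simp [P]

lemma equiv_apply_iota (x : DeltaGen n) :
    (FreeAlgebra.equivMonoidAlgebraFreeMonoid (R := K) (X := DeltaGen n)) (ι K x)
      = MonoidAlgebra.single (FreeMonoid.of x) 1 := by
  show (FreeAlgebra.lift K fun x => (MonoidAlgebra.of K (FreeMonoid (DeltaGen n)))
    (FreeMonoid.of x)) (ι K x) = _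
  rw [FreeAlgebra.lift_ι_apply, MonoidAlgebra.of_apply]

lemma equiv_symm_single (w : FreeMonoid (DeltaGen n)) :
    (FreeAlgebra.equivMonoidAlgebraFreeMonoid (R := K) (X := DeltaGen n)).symm
      (MonoidAlgebra.single w 1) = P K n (FreeMonoid.toList w) := by
  refine FreeMonoid.recOn w ?_ ?_
  · rw [show MonoidAlgebra.single (1 : FreeMonoid (DeltaGen n)) (1 : K) = 1 from rfl]
    rw [map_one]
    simp [P, FreeMonoid.toList_one]
  · intro x xs ih
    have hsplit : MonoidAlgebra.single (FreeMonoid.of x * xs) (1 : K)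
        = MonoidAlgebra.single (FreeMonoid.of x) 1 * MonoidAlgebra.single xs 1 := by
      rw [MonoidAlgebra.single_mul_single, one_mul]
    rw [hsplit, map_mul, ih, ← equiv_apply_iota, AlgEquiv.symm_apply_apply]
    rw [FreeMonoid.toList_of_mul]
    rw [show P K n (x :: FreeMonoid.toList xs) = ι K x * P K n (FreeMonoid.toList xs) from by
      simp [P]]

lemma basis_apply (w : FreeMonoid (DeltaGen n)) :
    (FreeAlgebra.basisFreeMonoid K (DeltaGen n)) w = P K n (FreeMonoid.toList w) := by
  rw [FreeAlgebra.basisFreeMonoid, Module.Basis.map_apply]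
  show (FreeAlgebra.equivMonoidAlgebraFreeMonoid (R := K) (X := DeltaGen n)).symm
    (MonoidAlgebra.single w 1) = _
  exact equiv_symm_single K n w

noncomputable def tau : FA K n →ₗ[K] K :=
  (FreeAlgebra.basisFreeMonoid K (DeltaGen n)).constr K fun w => gfun K (FreeMonoid.toList w)

lemma tau_P (w : List (DeltaGen n)) : tau K n (P K n w) = gfun K w := by
  have h := (FreeAlgebra.basisFreeMonoid K (DeltaGen n)).constr_basis K
    (fun w => gfun (n := n) K (FreeMonoid.toList w)) (FreeMonoid.ofList w)
  rw [basis_apply] at h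
  rw [tau]
  simpa using h

lemma tau_PP (w u : List (DeltaGen n)) :
    tau K n (P K n w * P K n u) = gfun K (w ++ u) := by
  rw [← P_append, tau_P]

lemma tau_mul_comm (x y : FA K n) : tau K n (x * y) = tau K n (y * x) := by
  have h : ((LinearMap.mul K (FA K n)).compr₂ (tau K n))
      = ((LinearMap.mul K (FA K n)).flip.compr₂ (tau K n)) := by
    apply (FreeAlgebra.basisFreeMonoid K (DeltaGen n)).ext
    intro u
    apply (FreeAlgebra.basisFreeMonoid K (DeltaGen n)).ext
    intro v
    simp only [LinearMap.compr₂_apply, LinearMap.mul_apply', LinearMap.flip_apply]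
    rw [basis_apply, basis_apply, tau_PP, tau_PP]
    exact gfun_rot K _ _
  exact DFunLike.congr_fun (DFunLike.congr_fun h x) y

lemma ge_eq (i : Fin n) : ge K n i = P K n [DeltaGen.e i] := (P_singleton K n _).symm
lemma ga_eq : ga K n = P K n [DeltaGen.a] := (P_singleton K n _).symm
lemma gb_eq (i : Fin n) : gb K n i = P K n [DeltaGen.b i] := (P_singleton K n _).symm

lemma bprod_eq (lo hi : ℕ) : bprod K n lo hi = P K n (bList lo hi) := by
  rw [bprod, P, bList, List.map_map]
  rfl

lemma bList_one (lo : ℕ) : bList (n := n) lo (lo + 1) = [bfun lo] := by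
  simp [bList, List.range'_succ]

variable [CharP K 2]

lemma tau_word_rel (r : FA K n) (hr : r ∈ omegaRels K n) (w : List (DeltaGen n)) :
    tau K n (P K n w * r) = 0 := by
  simp only [omegaRels, quiverRels, Set.mem_union, Set.mem_setOf_eq, Set.mem_insert_iff,
    Set.mem_singleton_iff] at hr
  rcases hr with ((((((⟨i, j, rfl⟩ | rfl) | (rfl | rfl)) | ⟨i, rfl⟩) | ⟨i, rfl⟩) |
    (rfl | rfl | rfl)) | ⟨j, hj2, hjn, rfl⟩)
  · -- e i * e j - delta
    by_cases hij : i = j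
    · subst hij
      rw [if_pos rfl, ge_eq, mul_sub, ← P_append, ← P_append, map_sub, tau_P, tau_PP]
      rw [show ([DeltaGen.e i] ++ [DeltaGen.e i] : List (DeltaGen n)) = [DeltaGen.e i, DeltaGen.e i] from rfl]
      rw [gfun_congr K (u := [DeltaGen.e i, DeltaGen.e i]) (v := [DeltaGen.e i])
        (by simp [comp]) (by simp) w]
      exact sub_self _
    · rw [if_neg hij, sub_zero, ge_eq, ge_eq, ← P_append, ← P_append, tau_P]
      rw [show ([DeltaGen.e i] ++ [DeltaGen.e j] : List (DeltaGen n)) = [DeltaGen.e i, DeltaGen.e j] from rfl]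
      apply gfun_zero_of_seg_none
      simp [comp, hij]
  · -- sum e i - 1
    rw [mul_sub, mul_one, map_sub, Finset.mul_sum, map_sum]
    have hterm : ∀ i : Fin n, tau K n (P K n w * ge K n i) = gfun K (w ++ [DeltaGen.e i]) := by
      intro i
      rw [ge_eq, tau_PP]
    rw [Finset.sum_congr rfl fun i _ => hterm i, gfun_sum_e, tau_P, sub_self]
  · -- e 0 * a - a
    rw [ge_eq, ga_eq, mul_sub, ← P_append, ← P_append, map_sub, tau_P, tau_PP]
    rw [show ([DeltaGen.e 0] ++ [DeltaGen.a] : List (DeltaGen n)) = [DeltaGen.e 0, DeltaGen.a] from rfl]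
    rw [gfun_congr K (u := [DeltaGen.e 0, DeltaGen.a]) (v := [DeltaGen.a])
      (by simp [comp]) (by simp) w]
    exact sub_self _
  · -- a * e 0 - a
    rw [ge_eq, ga_eq, mul_sub, ← P_append, ← P_append, map_sub, tau_P, tau_PP]
    rw [show ([DeltaGen.a] ++ [DeltaGen.e 0] : List (DeltaGen n)) = [DeltaGen.a, DeltaGen.e 0] from rfl]
    rw [gfun_congr K (u := [DeltaGen.a, DeltaGen.e 0]) (v := [DeltaGen.a])
      (by simp [comp]) (by simp) w]
    exact sub_self _
  · -- e i * b i - b i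
    rw [ge_eq, gb_eq, mul_sub, ← P_append, ← P_append, map_sub, tau_P, tau_PP]
    rw [show ([DeltaGen.e i] ++ [DeltaGen.b i] : List (DeltaGen n)) = [DeltaGen.e i, DeltaGen.b i] from rfl]
    rw [gfun_congr K (u := [DeltaGen.e i, DeltaGen.b i]) (v := [DeltaGen.b i])
      (by simp [comp]) (by simp) w]
    exact sub_self _
  · -- b i * e (i+1) - b i
    rw [ge_eq, gb_eq, mul_sub, ← P_append, ← P_append, map_sub, tau_P, tau_PP]
    rw [show ([DeltaGen.b i] ++ [DeltaGen.e (i+1)] : List (DeltaGen n)) = [DeltaGen.b i, DeltaGen.e (i+1)] from rfl]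
    rw [gfun_congr K (u := [DeltaGen.b i, DeltaGen.e (i+1)]) (v := [DeltaGen.b i])
      (by simp [comp]) (by simp) w]
    exact sub_self _
  · -- a B + B a
    rw [bprod_eq, ga_eq, mul_add, ← P_append, ← P_append, ← P_append, ← P_append,
      map_add, tau_P, tau_P]
    rw [show (w ++ ([DeltaGen.a] ++ bList 0 n) : List (DeltaGen n))
      = w ++ (DeltaGen.a :: WB) from rfl]
    rw [show (w ++ (bList 0 n ++ [DeltaGen.a]) : List (DeltaGen n))
      = w ++ (WB ++ [DeltaGen.a]) from rfl]
    rw [gfun_aWB_eq_WBa]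
    exact CharTwo.add_self_eq_zero _
  · -- a^2 - a B
    rw [sq, bprod_eq, ga_eq, mul_sub, ← P_append, ← P_append, ← P_append, ← P_append,
      map_sub, tau_P, tau_P]
    rw [show (w ++ ([DeltaGen.a] ++ [DeltaGen.a]) : List (DeltaGen n))
      = w ++ [DeltaGen.a, DeltaGen.a] from rfl]
    rw [show (w ++ ([DeltaGen.a] ++ bList 0 n) : List (DeltaGen n))
      = w ++ (DeltaGen.a :: WB) from rfl]
    rw [gfun_aa_eq_aWB]
    exact sub_self _
  · -- b_{n-1} b_0
    have h1 : bList (n := n) (n-1) n = [bfun (n-1)] := by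
      have h := bList_one (n := n) (n-1)
      rw [show n - 1 + 1 = n from by
        have := Nat.pos_of_ne_zero (NeZero.ne n); omega] at h
      exact h
    have h2 : bList (n := n) 0 1 = [bfun 0] := bList_one (n := n) 0
    rw [bprod_eq, bprod_eq, h1, h2, ← P_append, ← P_append, tau_P]
    rw [show (w ++ ([bfun (n-1)] ++ [bfun 0]) : List (DeltaGen n))
      = w ++ [bfun (n-1), bfun 0] from rfl]
    exact gfun_bnb0 K w
  · -- middle relations
    rw [bprod_eq, bprod_eq, ga_eq, ← P_append, ← P_append, ← P_append, tau_P]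
    rw [show ((bList (j-1) n ++ [DeltaGen.a]) ++ bList 0 j : List (DeltaGen n))
      = bList (j-1) n ++ (DeltaGen.a :: bList 0 j) from by
        rw [List.append_assoc]; rfl]
    exact gfun_middle K w j hj2 hjn

lemma tau_mul_rel_zero (r : FA K n) (hr : r ∈ omegaRels K n) (c : FA K n) :
    tau K n (c * r) = 0 := by
  have hmap : (tau K n).comp (LinearMap.mulRight K r) = 0 := by
    apply (FreeAlgebra.basisFreeMonoid K (DeltaGen n)).ext
    intro u
    simp only [LinearMap.comp_apply, LinearMap.mulRight_apply, LinearMap.zero_apply]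
    rw [basis_apply]
    exact tau_word_rel K n r hr _
  simpa using DFunLike.congr_fun hmap c

lemma tau_rel {x y : FA K n} (h : RingQuot.Rel (OmegaRel K n) x y) :
    ∀ c : FA K n, tau K n (x * c) = tau K n (y * c) := by
  induction h with
  | of h =>
    intro c
    obtain ⟨hmem, rfl⟩ := h
    rw [zero_mul, map_zero, tau_mul_comm]
    exact tau_mul_rel_zero K n _ hmem c
  | add_left h ih =>
    intro c
    rw [add_mul, add_mul, map_add, map_add, ih c]
  | mul_left h ih =>
    intro c
    rw [mul_assoc, mul_assoc]
    exact ih _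
  | mul_right h ih =>
    intro c
    rw [mul_assoc, mul_assoc, tau_mul_comm]
    conv_rhs => rw [tau_mul_comm]
    rw [mul_assoc, mul_assoc]
    exact ih _

noncomputable def T0 : Omega K n → K := fun z =>
  Quot.lift (fun x => tau K n x)
    (fun _ _ h => by simpa using tau_rel K n h 1) z.toQuot

lemma T0_pi (x : FA K n) : T0 K n (omegaPi K n x) = tau K n x := by
  have h1 : omegaPi K n x = ⟨Quot.mk (RingQuot.Rel (OmegaRel K n)) x⟩ := by
    rw [omegaPi, RingQuot.mkAlgHom_def]
    show RingQuot.mkRingHom (OmegaRel K n) x = _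
    rw [RingQuot.mkRingHom_def]
    rfl
  rw [h1]
  rfl

lemma pi_surj : Function.Surjective (omegaPi K n) := by
  rw [omegaPi]
  exact RingQuot.mkAlgHom_surjective K _

noncomputable def TL : Omega K n →ₗ[K] K where
  toFun := T0 K n
  map_add' := by
    intro u v
    obtain ⟨x, rfl⟩ := pi_surj K n u
    obtain ⟨y, rfl⟩ := pi_surj K n v
    rw [← map_add, T0_pi, T0_pi, T0_pi, map_add]
  map_smul' := by
    intro c u
    obtain ⟨x, rfl⟩ := pi_surj K n u
    show T0 K n (c • omegaPi K n x) = (RingHom.id K) c • T0 K n (omegaPi K n x)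
    rw [← map_smul, T0_pi, T0_pi, map_smul]
    rfl

lemma TL_comm_zero : commutatorSubspace K (Omega K n) ≤ LinearMap.ker (TL K n) := by
  rw [commutatorSubspace, Submodule.span_le]
  rintro z ⟨u, v, rfl⟩
  obtain ⟨x, rfl⟩ := pi_surj K n u
  obtain ⟨y, rfl⟩ := pi_surj K n v
  rw [SetLike.mem_coe, LinearMap.mem_ker]
  rw [← map_mul, ← map_mul, ← map_sub]
  show T0 K n _ = 0
  rw [T0_pi, map_sub, tau_mul_comm, sub_self]

lemma TL_ga_sq : TL K n ((omegaPi K n (ga K n)) ^ 2) = 1 := by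
  rw [sq, ← map_mul]
  show T0 K n _ = 1
  rw [T0_pi]
  rw [ga_eq, ← P_append, tau_P]
  rw [show ([DeltaGen.a] ++ [DeltaGen.a] : List (DeltaGen n)) = [DeltaGen.a, DeltaGen.a] from rfl]
  exact gfun_aa_val K

end OmegaTau


/-- in the nonstandard algebra `Ω(n)` over an algebraically closed
field of characteristic `2`, the element `α² = αβ₁⋯βₙ` is nonzero and does not lie
in the commutator subspace `K(Ω(n))`; consequently `α ∉ T_1(Ω(n))`. -/
theorem omega_alpha_sq_not_in_commutator {K : Type*} [Field K] [IsAlgClosed K]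
    [CharP K 2] (n : ℕ) [NeZero n] :
    (omegaPi K n (ga K n)) ^ 2 = omegaPi K n (ga K n * bprod K n 0 n) ∧
    (omegaPi K n (ga K n)) ^ 2 ≠ 0 ∧
    (omegaPi K n (ga K n)) ^ 2 ∉ commutatorSubspace K (Omega K n) := by
  classical
  have heq : (omegaPi K n (ga K n)) ^ 2 = omegaPi K n (ga K n * bprod K n 0 n) := by
    have hmem : (ga K n ^ 2 - ga K n * bprod K n 0 n) ∈ omegaRels K n :=
      Or.inl (Or.inr (Or.inr (Or.inl rfl)))
    have hrel : OmegaRel K n (ga K n ^ 2 - ga K n * bprod K n 0 n) 0 := ⟨hmem, rfl⟩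
    have h0 : omegaPi K n (ga K n ^ 2 - ga K n * bprod K n 0 n) = omegaPi K n 0 := by
      rw [omegaPi]
      exact RingQuot.mkAlgHom_rel K hrel
    rw [map_sub, map_zero, sub_eq_zero] at h0
    rw [map_pow] at h0
    exact h0
  have hnot : (omegaPi K n (ga K n)) ^ 2 ∉ commutatorSubspace K (Omega K n) := by
    intro hmem
    have h0 : OmegaTau.TL K n ((omegaPi K n (ga K n)) ^ 2) = 0 :=
      OmegaTau.TL_comm_zero K n hmem
    rw [OmegaTau.TL_ga_sq K n] at h0
    exact one_ne_zero h0
  refine ⟨heq, fun h0 => hnot (by rw [h0]; exact Submodule.zero_mem _), hnot⟩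
end

section
/- In the nonstandard algebra D(m) (char K = 2, m ≥ 2), the element α² does not belong to the commutator subspace K(D(m)). Explicitly, a K-basis of K(D(m)) is given by all basis paths other than e_1,…,e_m, α, α², s_1,…,s_m, together with the elements α² − s_2, …, α² − s_m, and s_m − α³, and α² is not a linear combination of these. -/
variable (K : Type*) [Field K] (n : ℕ) [NeZero n]

open FreeAlgebra

/-- The defining relations of `D(m)` (here the parameter is named `n`):
`α² = β₁⋯β_m`, `β_mβ₁ = β_m α β₁`, and `β_i⋯β_m α β_1⋯β_i = 0` for `1 ≤ i ≤ m`. -/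
def dRels : Set (FA K n) :=
  quiverRels K n ∪
  {ga K n ^ 2 - bprod K n 0 n,
   bprod K n (n - 1) n * bprod K n 0 1 -
     bprod K n (n - 1) n * ga K n * bprod K n 0 1} ∪
  {x | ∃ i : ℕ, 1 ≤ i ∧ i ≤ n ∧
        x = bprod K n (i - 1) n * ga K n * bprod K n 0 i}

def DRel (x y : FA K n) : Prop := x ∈ dRels K n ∧ y = 0

/-- The nonstandard algebra `D(m)`. -/
abbrev DAlg := RingQuot (DRel K n)

noncomputable def dPi : FA K n →ₐ[K] DAlg K n := RingQuot.mkAlgHom K _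

/-! ### Auxiliary development: a symmetric functional separating `α²` from commutators -/

namespace DAuxL

open DeltaGen
set_option linter.unusedSectionVars false

variable {n : ℕ} [NeZero n]

/-- Source vertex of a generator. -/
def src : DeltaGen n → Fin n
  | .e i => i
  | .a => 0
  | .b i => i

/-- Target vertex of a generator. -/
def tgt : DeltaGen n → Fin n
  | .e i => i
  | .a => 0
  | .b i => i + 1

/-- `ChainV v l` : `l` is a coherent path starting at vertex `v`. -/
def ChainV : Fin n → List (DeltaGen n) → Prop
  | _, [] => True
  | v, x :: t => src x = v ∧ ChainV (tgt x) t

/-- End vertex of a walk. -/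
def endV : Fin n → List (DeltaGen n) → Fin n
  | v, [] => v
  | _, x :: t => endV (tgt x) t

@[simp] lemma chainV_nil (v : Fin n) : ChainV v ([] : List (DeltaGen n)) := trivial

@[simp] lemma chainV_cons {v : Fin n} {x : DeltaGen n} {t : List (DeltaGen n)} :
    ChainV v (x :: t) ↔ src x = v ∧ ChainV (tgt x) t := Iff.rfl

@[simp] lemma endV_nil (v : Fin n) : endV v ([] : List (DeltaGen n)) = v := rfl

@[simp] lemma endV_cons (v : Fin n) (x : DeltaGen n) (t : List (DeltaGen n)) :
    endV v (x :: t) = endV (tgt x) t := rfl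

lemma chainV_append {l₁ l₂ : List (DeltaGen n)} {v : Fin n} :
    ChainV v (l₁ ++ l₂) ↔ ChainV v l₁ ∧ ChainV (endV v l₁) l₂ := by
  induction l₁ generalizing v with
  | nil => simp
  | cons x t ih => simp [ih, and_assoc]

lemma endV_append (v : Fin n) (l₁ l₂ : List (DeltaGen n)) :
    endV v (l₁ ++ l₂) = endV (endV v l₁) l₂ := by
  induction l₁ generalizing v with
  | nil => rfl
  | cons x t ih => simp [ih]

lemma endV_indep (v v' : Fin n) (l : List (DeltaGen n)) (h : l ≠ []) :
    endV v l = endV v' l := by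
  cases l with
  | nil => exact absurd rfl h
  | cons x t => rfl

/-- `Closed w` : `w` is a nonempty cyclically-coherent word. -/
def Closed : List (DeltaGen n) → Prop
  | [] => False
  | x :: t => ChainV (tgt x) t ∧ endV (tgt x) t = src x

@[simp] lemma closed_nil : ¬ Closed ([] : List (DeltaGen n)) := id

lemma closed_cons (x : DeltaGen n) (t : List (DeltaGen n)) :
    Closed (x :: t) ↔ ChainV (tgt x) t ∧ endV (tgt x) t = src x := Iff.rfl

lemma closed_rotate_one (x : DeltaGen n) (t : List (DeltaGen n)) :
    Closed (x :: t) ↔ Closed (t ++ [x]) := by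
  cases t with
  | nil => simp [closed_cons]
  | cons y t' =>
    simp only [List.cons_append, closed_cons, chainV_cons, chainV_append, endV_cons,
      endV_append, endV_nil]
    constructor
    · rintro ⟨⟨h1, h2⟩, h3⟩
      exact ⟨⟨h2, h3.symm, trivial⟩, h1.symm⟩
    · rintro ⟨⟨h2, h3, -⟩, h1⟩
      exact ⟨⟨h1.symm, h2⟩, h3.symm⟩

lemma closed_append_comm (u v : List (DeltaGen n)) :
    Closed (u ++ v) ↔ Closed (v ++ u) := by
  induction u generalizing v with
  | nil => simp
  | cons x u' ih =>
    calc Closed ((x :: u') ++ v) ↔ Closed ((u' ++ v) ++ [x]) := closed_rotate_one x (u' ++ v)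
    _ ↔ Closed (u' ++ (v ++ [x])) := by rw [List.append_assoc]
    _ ↔ Closed ((v ++ [x]) ++ u') := ih _
    _ ↔ Closed (v ++ (x :: u')) := by rw [List.append_assoc]; rfl

/-- Number of `a`-letters. -/
def cA : DeltaGen n → ℕ
  | .a => 1
  | _ => 0

/-- Number of `b`-letters. -/
def cB : DeltaGen n → ℕ
  | .b _ => 1
  | _ => 0

def cntA (w : List (DeltaGen n)) : ℕ := (w.map cA).sum
def cntB (w : List (DeltaGen n)) : ℕ := (w.map cB).sum

@[simp] lemma cntA_nil : cntA ([] : List (DeltaGen n)) = 0 := rfl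
@[simp] lemma cntB_nil : cntB ([] : List (DeltaGen n)) = 0 := rfl
@[simp] lemma cntA_cons (x : DeltaGen n) (t : List (DeltaGen n)) :
    cntA (x :: t) = cA x + cntA t := by simp [cntA]
@[simp] lemma cntB_cons (x : DeltaGen n) (t : List (DeltaGen n)) :
    cntB (x :: t) = cB x + cntB t := by simp [cntB]
@[simp] lemma cntA_append (u v : List (DeltaGen n)) : cntA (u ++ v) = cntA u + cntA v := by
  simp [cntA]
@[simp] lemma cntB_append (u v : List (DeltaGen n)) : cntB (u ++ v) = cntB u + cntB v := by
  simp [cntB]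

@[simp] lemma cA_e (i : Fin n) : cA (DeltaGen.e i) = 0 := rfl
@[simp] lemma cA_a : cA (DeltaGen.a : DeltaGen n) = 1 := rfl
@[simp] lemma cA_b (i : Fin n) : cA (DeltaGen.b i) = 0 := rfl
@[simp] lemma cB_e (i : Fin n) : cB (DeltaGen.e i) = 0 := rfl
@[simp] lemma cB_a : cB (DeltaGen.a : DeltaGen n) = 0 := rfl
@[simp] lemma cB_b (i : Fin n) : cB (DeltaGen.b i) = 1 := rfl

/-- The support condition for the symmetric functional. -/
def Good (w : List (DeltaGen n)) : Prop :=
  Closed w ∧ ((cntB w = 0 ∧ (cntA w = 2 ∨ cntA w = 3)) ∨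
              (cntB w = n ∧ (cntA w = 0 ∨ cntA w = 1)))

open Classical in
/-- The value of the symmetric functional on a word. -/
noncomputable def fval (K : Type*) [Field K] (w : List (DeltaGen n)) : K :=
  if Good w then 1 else 0

variable (K : Type*) [Field K]

lemma fval_congr {w w' : List (DeltaGen n)} (h : Good w ↔ Good w') :
    fval K w = fval K w' := by
  classical
  unfold fval
  exact if_congr h rfl rfl

lemma fval_of_not_good {w : List (DeltaGen n)} (h : ¬ Good w) : fval K w = 0 := by
  classical
  unfold fval
  exact if_neg h

lemma good_rotate (u v : List (DeltaGen n)) : Good (u ++ v) ↔ Good (v ++ u) := by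
  unfold Good
  rw [closed_append_comm]
  simp [Nat.add_comm]

lemma fval_rotate (u v : List (DeltaGen n)) : fval K (u ++ v) = fval K (v ++ u) :=
  fval_congr K (good_rotate u v)

end DAuxL

namespace DAuxL
variable {n : ℕ} [NeZero n]
open DeltaGen
open Fin.NatCast
set_option linter.unusedSectionVars false

/-- The word `β_{lo+1} ⋯ β_{lo+k}` (indices mod `n`). -/
def bw (lo k : ℕ) : List (DeltaGen n) :=
  (List.range' lo k).map fun i => DeltaGen.b (i : Fin n)

@[simp] lemma bw_zero (lo : ℕ) : (bw lo 0 : List (DeltaGen n)) = [] := rfl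

lemma bw_succ (lo k : ℕ) :
    (bw lo (k+1) : List (DeltaGen n)) = DeltaGen.b (lo : Fin n) :: bw (lo+1) k := by
  simp [bw, List.range'_succ]

@[simp] lemma bw_one (lo : ℕ) : (bw lo 1 : List (DeltaGen n)) = [DeltaGen.b (lo : Fin n)] := by
  simp [bw_succ]

lemma tgt_b_cast (k : ℕ) :
    tgt (DeltaGen.b (k : Fin n)) = ((k + 1 : ℕ) : Fin n) := by
  simp [tgt, Nat.cast_add_one]

@[simp] lemma cntA_bw (lo k : ℕ) : cntA (bw lo k : List (DeltaGen n)) = 0 := by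
  induction k generalizing lo with
  | zero => rfl
  | succ k ih => simp [bw_succ, ih]

@[simp] lemma cntB_bw (lo k : ℕ) : cntB (bw lo k : List (DeltaGen n)) = k := by
  induction k generalizing lo with
  | zero => rfl
  | succ k ih => simp [bw_succ, ih, Nat.add_comm]

lemma chainV_bw (k lo : ℕ) : ChainV ((lo : ℕ) : Fin n) (bw lo k) := by
  induction k generalizing lo with
  | zero => simp
  | succ k ih =>
    rw [bw_succ]
    refine ⟨rfl, ?_⟩
    rw [tgt_b_cast]
    exact ih (lo + 1)

lemma endV_bw (k lo : ℕ) : endV ((lo : ℕ) : Fin n) (bw lo k : List (DeltaGen n))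
    = ((lo + k : ℕ) : Fin n) := by
  induction k generalizing lo with
  | zero => simp
  | succ k ih =>
    rw [bw_succ, endV_cons, tgt_b_cast, ih (lo + 1)]
    congr 1
    omega

/-- A coherent path starting at `v` containing an `a` passes through vertex `0` after
some number `j ≤ cntB` of `b`-steps. -/
lemma walk_a : ∀ (l : List (DeltaGen n)) (v : Fin n), ChainV v l → DeltaGen.a ∈ l →
    ∃ j : ℕ, j ≤ cntB l ∧ v + (j : Fin n) = 0 := by
  intro l
  induction l with
  | nil => intro v _ h; cases h
  | cons x t ih =>
    intro v hc hm
    rcases hc with ⟨hsrc, hct⟩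
    rcases List.mem_cons.mp hm with rfl | hmt
    · exact ⟨0, by simp, by simpa [src] using hsrc.symm⟩
    · obtain ⟨j, hj, hv⟩ := ih (tgt x) hct hmt
      cases x with
      | e i =>
        refine ⟨j, by simpa using hj, ?_⟩
        have : (i : Fin n) = v := hsrc
        rw [← this]
        simpa [tgt] using hv
      | a =>
        refine ⟨j, by simpa using hj, ?_⟩
        have : (0 : Fin n) = v := hsrc
        rw [← this]
        simpa [tgt] using hv
      | b i =>
        refine ⟨j + 1, by simp; omega, ?_⟩
        have hv' : (i : Fin n) = v := hsrc
        have : v + ((j + 1 : ℕ) : Fin n) = (tgt (DeltaGen.b i)) + (j : Fin n) := by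
          rw [← hv']
          simp only [tgt, Nat.cast_add_one]
          abel
        rw [this, hv]

lemma mem_a_of_cntA {l : List (DeltaGen n)} (h : cntA l ≠ 0) : DeltaGen.a ∈ l := by
  induction l with
  | nil => exact absurd rfl h
  | cons x t ih =>
    cases x with
    | a => exact List.mem_cons_self
    | e i => exact List.mem_cons_of_mem _ (ih (by simpa using h))
    | b i => exact List.mem_cons_of_mem _ (ih (by simpa using h))

end DAuxL

namespace DAuxL
variable {n : ℕ} [NeZero n]
open DeltaGen
open Fin.NatCast
set_option linter.unusedSectionVars false

@[simp] lemma src_e (i : Fin n) : src (DeltaGen.e i) = i := rfl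
@[simp] lemma src_a : src (DeltaGen.a : DeltaGen n) = 0 := rfl
@[simp] lemma src_b (i : Fin n) : src (DeltaGen.b i) = i := rfl
@[simp] lemma tgt_e (i : Fin n) : tgt (DeltaGen.e i) = i := rfl
@[simp] lemma tgt_a : tgt (DeltaGen.a : DeltaGen n) = 0 := rfl
@[simp] lemma tgt_b (i : Fin n) : tgt (DeltaGen.b i) = i + 1 := rfl

variable (K : Type*) [Field K]

lemma fval_e_cons (i : Fin n) (y : DeltaGen n) (t : List (DeltaGen n)) :
    fval K (DeltaGen.e i :: y :: t) = if src y = i then fval K (y :: t) else 0 := by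
  split
  · next h =>
    refine fval_congr K ?_
    unfold Good
    simp only [closed_cons, chainV_cons, endV_cons, cntA_cons, cntB_cons, cA_e, cB_e,
      Nat.zero_add, tgt_e, src_e]
    constructor
    · rintro ⟨⟨⟨h1, h2⟩, h3⟩, h4⟩
      exact ⟨⟨h2, by rw [h3, h]⟩, h4⟩
    · rintro ⟨⟨h2, h3⟩, h4⟩
      exact ⟨⟨⟨h, h2⟩, by rw [h3, h]⟩, h4⟩
  · next h =>
    refine fval_of_not_good K ?_
    rintro ⟨⟨⟨h1, -⟩, -⟩, -⟩
    rw [tgt_e] at h1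
    exact h h1

lemma fval_e_single (i : Fin n) : fval K [DeltaGen.e i] = 0 := by
  refine fval_of_not_good K ?_
  rintro ⟨-, ⟨h1, h2⟩ | ⟨h1, h2⟩⟩
  · simp only [cntA_cons, cntA_nil, cA_e] at h2
    omega
  · simp only [cntB_cons, cntB_nil, cB_e] at h1
    exact NeZero.ne n (by omega)

lemma fval_sum_e (l : List (DeltaGen n)) :
    (∑ i : Fin n, fval K (DeltaGen.e i :: l)) = fval K l := by
  cases l with
  | nil =>
    simp only [fval_e_single]
    rw [Finset.sum_const_zero]
    exact (fval_of_not_good K (by rintro ⟨h, -⟩; exact h)).symm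
  | cons y t =>
    simp only [fval_e_cons]
    rw [Finset.sum_ite_eq Finset.univ (src y) (fun _ => fval K (y :: t))]
    simp

lemma fval_cons_e (x : DeltaGen n) (k : Fin n) (hk : tgt x = k) (w : List (DeltaGen n)) :
    fval K (x :: DeltaGen.e k :: w) = fval K (x :: w) := by
  refine fval_congr K ?_
  unfold Good
  simp only [closed_cons, chainV_cons, endV_cons, cntA_cons, cntB_cons, cA_e, cB_e,
    Nat.zero_add, src_e, tgt_e, hk]
  cases w with
  | nil =>
    simp only [chainV_nil, endV_nil, true_and, and_true]
  | cons z w' =>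
    simp only [chainV_cons, endV_cons]
    tauto

lemma fval_not_src {x y : DeltaGen n} (h : src y ≠ tgt x) (t : List (DeltaGen n)) :
    fval K (x :: y :: t) = 0 := by
  refine fval_of_not_good K ?_
  rintro ⟨⟨⟨h1, -⟩, -⟩, -⟩
  exact h h1

lemma bw_cons_of_eq {k : ℕ} (hk : n = k + 1) :
    (bw 0 n : List (DeltaGen n)) = DeltaGen.b ((0:ℕ) : Fin n) :: bw 1 k := by
  unfold bw
  rw [show List.range' 0 n = 0 :: List.range' 1 k by rw [hk]; exact List.range'_succ]
  simp

/-- Relation `α² = β₁⋯β_m` at the level of `fval`. -/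
lemma fval_aa (l : List (DeltaGen n)) :
    fval K (DeltaGen.a :: DeltaGen.a :: l) = fval K (bw 0 n ++ l) := by
  obtain ⟨k, hk⟩ := Nat.exists_eq_succ_of_ne_zero (NeZero.ne n)
  refine fval_congr K ?_
  unfold Good
  have h1 : Closed (DeltaGen.a :: DeltaGen.a :: l) ↔ ChainV 0 l ∧ endV (0 : Fin n) l = 0 := by
    simp [closed_cons]
  have e1 : ChainV ((1 : ℕ) : Fin n) (bw 1 k : List (DeltaGen n)) := chainV_bw k 1
  have e2 : endV ((1 : ℕ) : Fin n) (bw 1 k : List (DeltaGen n)) = (0 : Fin n) := by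
    rw [endV_bw k 1, show 1 + k = n by omega]
    simp
  have h2 : Closed (bw 0 n ++ l) ↔ ChainV 0 l ∧ endV (0 : Fin n) l = 0 := by
    rw [bw_cons_of_eq hk]
    simp only [List.cons_append, closed_cons, chainV_append, endV_append]
    rw [tgt_b_cast 0]
    have hc : ((0 + 1 : ℕ) : Fin n) = ((1:ℕ) : Fin n) := by norm_num
    rw [hc, e2]
    have hsrc0 : src (DeltaGen.b ((0:ℕ) : Fin n)) = (0 : Fin n) := by simp
    rw [hsrc0]
    constructor
    · rintro ⟨⟨-, hl⟩, he⟩; exact ⟨hl, he⟩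
    · rintro ⟨hl, he⟩; exact ⟨⟨e1, hl⟩, he⟩
  rw [h1, h2]
  have hcA : cntA (DeltaGen.a :: DeltaGen.a :: l) = cntA l + 2 := by simp; omega
  have hcB : cntB (DeltaGen.a :: DeltaGen.a :: l) = cntB l := by simp
  have hcA' : cntA (bw 0 n ++ l) = cntA l := by simp
  have hcB' : cntB (bw 0 n ++ l) = cntB l + n := by simp [Nat.add_comm]
  rw [hcA, hcB, hcA', hcB']
  have hn : n ≠ 0 := NeZero.ne n
  constructor
  · rintro ⟨hc, h⟩; exact ⟨hc, by omega⟩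
  · rintro ⟨hc, h⟩; exact ⟨hc, by omega⟩

end DAuxL

namespace DAuxL
variable {n : ℕ} [NeZero n]
open DeltaGen
open Fin.NatCast
set_option linter.unusedSectionVars false

variable (K : Type*) [Field K]

lemma tgt_b_pred : tgt (DeltaGen.b ((n-1 : ℕ) : Fin n)) = (0 : Fin n) := by
  rw [tgt_b_cast, Nat.sub_add_cancel (Nat.one_le_iff_ne_zero.mpr (NeZero.ne n))]
  exact Fin.natCast_self n

/-- Relation `β_mβ₁ = β_mαβ₁` at the level of `fval`. -/
lemma fval_R6 (l : List (DeltaGen n)) :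
    fval K (DeltaGen.b ((n-1 : ℕ) : Fin n) :: DeltaGen.b ((0:ℕ) : Fin n) :: l) =
    fval K (DeltaGen.b ((n-1 : ℕ) : Fin n) :: DeltaGen.a :: DeltaGen.b ((0:ℕ) : Fin n) :: l) := by
  have hc0 : ((0:ℕ) : Fin n) = (0 : Fin n) := Nat.cast_zero
  have hpred : ((n-1 : ℕ) : Fin n) + 1 = (0 : Fin n) := by
    simpa [tgt_b] using tgt_b_pred (n := n)
  have hL : Closed (DeltaGen.b ((n-1 : ℕ) : Fin n) :: DeltaGen.b ((0:ℕ) : Fin n) :: l) ↔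
      ChainV (1 : Fin n) l ∧ endV (1 : Fin n) l = ((n-1 : ℕ) : Fin n) := by
    simp only [closed_cons, chainV_cons, endV_cons, src_b, tgt_b, hpred, hc0, zero_add]
    tauto
  have hR : Closed (DeltaGen.b ((n-1 : ℕ) : Fin n) :: DeltaGen.a :: DeltaGen.b ((0:ℕ) : Fin n) :: l) ↔
      ChainV (1 : Fin n) l ∧ endV (1 : Fin n) l = ((n-1 : ℕ) : Fin n) := by
    simp only [closed_cons, chainV_cons, endV_cons, src_b, src_a, tgt_a, tgt_b, hpred,
      hc0, zero_add]
    tauto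
  have noA : ¬ (ChainV (1 : Fin n) l ∧ cntB l + 2 = n ∧ cntA l ≠ 0) := by
    rintro ⟨hch, hcb, hca⟩
    obtain ⟨j, hj, hv⟩ := walk_a l 1 hch (mem_a_of_cntA hca)
    have : ((1 + j : ℕ) : Fin n) = 0 := by
      rw [Nat.cast_add, Nat.cast_one]
      exact hv
    have hdvd : n ∣ 1 + j := Fin.natCast_eq_zero.mp this
    have := Nat.le_of_dvd (by omega) hdvd
    omega
  refine fval_congr K ?_
  unfold Good
  rw [hL, hR]
  simp only [cntA_cons, cntB_cons, cA_b, cB_b, cA_a, cB_a, Nat.zero_add]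
  constructor
  · rintro ⟨hcl, ⟨hB, hA⟩ | ⟨hB, hA⟩⟩
    · omega
    · have hA0 : cntA l = 0 := by
        by_contra hne
        exact noA ⟨hcl.1, by omega, hne⟩
      exact ⟨hcl, Or.inr ⟨by omega, by omega⟩⟩
  · rintro ⟨hcl, ⟨hB, hA⟩ | ⟨hB, hA⟩⟩
    · omega
    · exact ⟨hcl, Or.inr ⟨by omega, by omega⟩⟩

/-- The zero relations `β_i⋯β_m α β_1⋯β_i = 0` at the level of `fval`. -/
lemma fval_R7 (i : ℕ) (h1 : 1 ≤ i) (h2 : i ≤ n) (l : List (DeltaGen n)) :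
    fval K (bw (i-1) (n-(i-1)) ++ DeltaGen.a :: (bw 0 i ++ l)) = 0 := by
  refine fval_of_not_good K ?_
  rintro ⟨-, ⟨hB, -⟩ | ⟨hB, -⟩⟩ <;>
  · simp only [cntB_append, cntB_cons, cntB_bw, cB_a, Nat.zero_add] at hB
    omega

lemma fval_aa_one : fval K ([DeltaGen.a, DeltaGen.a] : List (DeltaGen n)) = (1:K) := by
  unfold fval
  rw [if_pos]
  refine ⟨?_, Or.inl ⟨by simp, Or.inl (by simp)⟩⟩
  exact ⟨⟨rfl, trivial⟩, rfl⟩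

end DAuxL

section Plumbing
set_option linter.unusedSectionVars false
open DAuxL

/-- The product in the free algebra corresponding to a word. -/
def wordProd (l : List (DeltaGen n)) : FA K n := (l.map (ι K)).prod

@[simp] lemma wordProd_nil : wordProd K n ([] : List (DeltaGen n)) = 1 := rfl

@[simp] lemma wordProd_cons (x : DeltaGen n) (l : List (DeltaGen n)) :
    wordProd K n (x :: l) = ι K x * wordProd K n l := by
  simp [wordProd]

lemma wordProd_append (u v : List (DeltaGen n)) :
    wordProd K n (u ++ v) = wordProd K n u * wordProd K n v := by
  simp [wordProd]

lemma single_mul_single' (u v : FreeMonoid (DeltaGen n)) (c d : K) :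
    (MonoidAlgebra.single u c : MonoidAlgebra K (FreeMonoid (DeltaGen n)))
        * MonoidAlgebra.single v d
      = MonoidAlgebra.single (u * v) (c * d) := MonoidAlgebra.single_mul_single _ _ _ _

/-- The free algebra as a monoid algebra over the free monoid. -/
noncomputable def EMe : FA K n ≃ₐ[K] MonoidAlgebra K (FreeMonoid (DeltaGen n)) :=
  FreeAlgebra.equivMonoidAlgebraFreeMonoid

lemma EMe_ι (x : DeltaGen n) :
    EMe K n (ι K x) = MonoidAlgebra.single (FreeMonoid.of x) (1:K) := by
  simp [EMe, FreeAlgebra.equivMonoidAlgebraFreeMonoid, FreeAlgebra.lift_ι_apply,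
    MonoidAlgebra.of_apply]

lemma EMe_wordProd (l : List (DeltaGen n)) :
    EMe K n (wordProd K n l) = MonoidAlgebra.single (FreeMonoid.ofList l) (1:K) := by
  induction l with
  | nil =>
    rw [wordProd_nil, map_one, MonoidAlgebra.one_def]
    rfl
  | cons x t ih =>
    rw [wordProd_cons, map_mul, EMe_ι, ih, single_mul_single', one_mul]
    rfl

/-- The symmetric functional on the monoid algebra. -/
noncomputable def phi0 : MonoidAlgebra K (FreeMonoid (DeltaGen n)) →ₗ[K] K :=
  (Finsupp.linearCombination K (fun w : FreeMonoid (DeltaGen n) => fval K w.toList)).comp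
    (MonoidAlgebra.coeffLinearEquiv K).toLinearMap

lemma phi0_single (w : FreeMonoid (DeltaGen n)) (c : K) :
    phi0 K n (MonoidAlgebra.single w c) = c * fval K w.toList := by
  show (Finsupp.linearCombination K (fun w : FreeMonoid (DeltaGen n) => fval K w.toList))
      (Finsupp.single w c) = c * fval K w.toList
  rw [Finsupp.linearCombination_single, smul_eq_mul]

/-- The symmetric functional on the free algebra. -/
noncomputable def phi : FA K n →ₗ[K] K := (phi0 K n).comp (EMe K n).toLinearMap

lemma phi_apply (x : FA K n) : phi K n x = phi0 K n (EMe K n x) := rfl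

lemma phi_wordProd (l : List (DeltaGen n)) : phi K n (wordProd K n l) = fval K l := by
  rw [phi_apply, EMe_wordProd, phi0_single, FreeMonoid.toList_ofList, one_mul]

lemma phi0_mul_comm (p q : MonoidAlgebra K (FreeMonoid (DeltaGen n))) :
    phi0 K n (p * q) = phi0 K n (q * p) := by
  induction p using MonoidAlgebra.induction_linear with
  | zero => simp
  | add f g hf hg => simp only [add_mul, mul_add, map_add, hf, hg]
  | single u c =>
    induction q using MonoidAlgebra.induction_linear with
    | zero => simp
    | add f g hf hg => simp only [add_mul, mul_add, map_add, hf, hg]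
    | single v d =>
      rw [single_mul_single', single_mul_single', phi0_single, phi0_single]
      have h1 : fval K (u * v).toList = fval K (v * u).toList := by
        rw [FreeMonoid.toList_mul, FreeMonoid.toList_mul]
        exact fval_rotate K _ _
      rw [h1, mul_comm c d]

lemma phi_mul_comm (x y : FA K n) : phi K n (x * y) = phi K n (y * x) := by
  rw [phi_apply, phi_apply, show EMe K n (x * y) = EMe K n x * EMe K n y from map_mul _ _ _,
    show EMe K n (y * x) = EMe K n y * EMe K n x from map_mul _ _ _, phi0_mul_comm]

lemma phi_ext_words (p q : FA K n)
    (h : ∀ l : List (DeltaGen n),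
      phi K n (p * wordProd K n l) = phi K n (q * wordProd K n l)) (v : FA K n) :
    phi K n (p * v) = phi K n (q * v) := by
  have key : ∀ z : MonoidAlgebra K (FreeMonoid (DeltaGen n)),
      phi0 K n (EMe K n p * z) = phi0 K n (EMe K n q * z) := by
    intro z
    induction z using MonoidAlgebra.induction_linear with
    | zero => simp
    | add f g hf hg => simp only [mul_add, map_add, hf, hg]
    | single w c =>
      have hw : (MonoidAlgebra.single w c : MonoidAlgebra K (FreeMonoid (DeltaGen n)))
          = c • EMe K n (wordProd K n w.toList) := by
        rw [EMe_wordProd, FreeMonoid.ofList_toList, MonoidAlgebra.smul_single', mul_one]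
      rw [hw, mul_smul_comm, map_smul, mul_smul_comm, map_smul]
      congr 1
      rw [← map_mul, ← map_mul]
      exact h w.toList
  have h2 := key (EMe K n v)
  rw [← map_mul, ← map_mul] at h2
  exact h2

lemma phi_mul_words_zero (p : FA K n)
    (h : ∀ l : List (DeltaGen n), phi K n (p * wordProd K n l) = 0) (v : FA K n) :
    phi K n (p * v) = 0 := by
  have h2 := phi_ext_words K n p 0 (fun l => by rw [zero_mul, map_zero, h l]) v
  rwa [zero_mul, map_zero] at h2

lemma phi_sub_mul (p q : FA K n)
    (h : ∀ l : List (DeltaGen n),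
      phi K n (p * wordProd K n l) = phi K n (q * wordProd K n l)) (v : FA K n) :
    phi K n ((p - q) * v) = 0 := by
  rw [sub_mul, map_sub, phi_ext_words K n p q h v, sub_self]

end Plumbing

section Rels
set_option linter.unusedSectionVars false
open DAuxL
open Fin.NatCast

lemma ge_word (i : Fin n) (l : List (DeltaGen n)) :
    ge K n i * wordProd K n l = wordProd K n (DeltaGen.e i :: l) := by
  simp [ge]

lemma ga_word (l : List (DeltaGen n)) :
    ga K n * wordProd K n l = wordProd K n (DeltaGen.a :: l) := by
  simp [ga]

lemma gb_word (i : Fin n) (l : List (DeltaGen n)) :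
    gb K n i * wordProd K n l = wordProd K n (DeltaGen.b i :: l) := by
  simp [gb]

lemma bprod_eq_aux (l : List ℕ) :
    ((l.map fun i => gb K n ⟨i % n, Nat.mod_lt i (Nat.pos_of_ne_zero (NeZero.ne n))⟩).prod)
      = wordProd K n (l.map fun i => DeltaGen.b (i : Fin n)) := by
  induction l with
  | nil => rfl
  | cons x t ih =>
    simp only [List.map_cons, List.prod_cons, wordProd_cons, ih]
    congr 1

lemma bprod_eq (lo hi : ℕ) : bprod K n lo hi = wordProd K n (bw lo (hi - lo)) :=
  bprod_eq_aux K n (List.range' lo (hi - lo))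

lemma phi_dRel {r : FA K n} (hr : r ∈ dRels K n) (v : FA K n) : phi K n (r * v) = 0 := by
  have hn : n ≠ 0 := NeZero.ne n
  simp only [dRels, quiverRels, Set.mem_union, Set.mem_insert_iff, Set.mem_singleton_iff,
    Set.mem_setOf_eq] at hr
  rcases hr with ((((((⟨i, j, rfl⟩ | hsum) | (h1 | h1)) | ⟨i, rfl⟩) | ⟨i, rfl⟩) | (h1 | h1))
    | ⟨i, hi1, hi2, rfl⟩)
  · -- e i * e j = δ_{ij} e i
    by_cases hij : i = j
    · subst hij
      rw [if_pos rfl]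
      apply phi_sub_mul
      intro l
      simp only [mul_assoc, ge_word, phi_wordProd]
      rw [fval_e_cons]
      simp
    · rw [if_neg hij, sub_zero]
      apply phi_mul_words_zero
      intro l
      simp only [mul_assoc, ge_word, phi_wordProd]
      rw [fval_e_cons, if_neg (by rw [src_e]; exact fun h => hij h.symm)]
  · -- ∑ e i = 1
    subst hsum
    apply phi_sub_mul
    intro l
    rw [one_mul, Finset.sum_mul, map_sum, phi_wordProd]
    rw [Finset.sum_congr rfl (fun i _ => by rw [ge_word, phi_wordProd])]
    exact fval_sum_e K l
  · -- e 0 * a = a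
    subst h1
    apply phi_sub_mul
    intro l
    simp only [mul_assoc, ga_word, ge_word, phi_wordProd]
    rw [fval_e_cons]
    simp
  · -- a * e 0 = a
    subst h1
    apply phi_sub_mul
    intro l
    simp only [mul_assoc, ge_word, ga_word, phi_wordProd]
    exact fval_cons_e K DeltaGen.a 0 rfl l
  · -- e i * b i = b i
    apply phi_sub_mul
    intro l
    simp only [mul_assoc, gb_word, ge_word, phi_wordProd]
    rw [fval_e_cons]
    simp
  · -- b i * e (i+1) = b i
    apply phi_sub_mul
    intro l
    simp only [mul_assoc, ge_word, gb_word, phi_wordProd]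
    exact fval_cons_e K (DeltaGen.b i) (i+1) rfl l
  · -- a² = full cycle
    subst h1
    apply phi_sub_mul
    intro l
    have hsq : ga K n ^ 2 * wordProd K n l = wordProd K n (DeltaGen.a :: DeltaGen.a :: l) := by
      rw [pow_two, mul_assoc, ga_word, ga_word]
    rw [hsq, bprod_eq, Nat.sub_zero, ← wordProd_append, phi_wordProd, phi_wordProd]
    exact fval_aa K l
  · -- β_m β_1 = β_m α β_1
    subst h1
    apply phi_sub_mul
    intro l
    have hbn1 : bprod K n (n-1) n = wordProd K n [DeltaGen.b ((n-1 : ℕ) : Fin n)] := by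
      rw [bprod_eq, show n - (n-1) = 1 by omega, bw_one]
    have hb01 : bprod K n 0 1 = wordProd K n [DeltaGen.b ((0 : ℕ) : Fin n)] := by
      rw [bprod_eq, Nat.sub_zero, bw_one]
    have hga : ga K n = wordProd K n [DeltaGen.a] := by simp [ga]
    rw [hbn1, hb01, hga, ← wordProd_append, ← wordProd_append, ← wordProd_append,
      ← wordProd_append, ← wordProd_append, phi_wordProd, phi_wordProd]
    simp only [List.append_assoc, List.cons_append, List.nil_append]
    exact fval_R6 K l
  · -- zero relations
    apply phi_mul_words_zero
    intro l
    have hbi1 : bprod K n (i-1) n = wordProd K n (bw (i-1) (n-(i-1))) := bprod_eq K n _ _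
    have hb0i : bprod K n 0 i = wordProd K n (bw 0 i) := by
      rw [bprod_eq, Nat.sub_zero]
    rw [mul_assoc, mul_assoc, hb0i, ← wordProd_append, ga_word, hbi1, ← wordProd_append,
      phi_wordProd]
    exact fval_R7 K i hi1 hi2 l

end Rels

section Jmachine
set_option linter.unusedSectionVars false
open DAuxL

/-- The two-sided ideal (as a submodule) generated by the relations. -/
def Jmod : Submodule K (FA K n) :=
  Submodule.span K {x | ∃ r ∈ dRels K n, ∃ u v : FA K n, x = u * r * v}

lemma Jmod_mul_right {x : FA K n} (c : FA K n) (hx : x ∈ Jmod K n) : x * c ∈ Jmod K n := by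
  induction hx using Submodule.span_induction with
  | mem y h =>
    obtain ⟨r, hr, u, v, rfl⟩ := h
    exact Submodule.subset_span ⟨r, hr, u, v * c, by simp only [mul_assoc]⟩
  | zero => rw [zero_mul]; exact Submodule.zero_mem _
  | add y z _ _ hy hz => rw [add_mul]; exact Submodule.add_mem _ hy hz
  | smul a y _ hy => rw [smul_mul_assoc]; exact Submodule.smul_mem _ a hy

lemma Jmod_mul_left {x : FA K n} (c : FA K n) (hx : x ∈ Jmod K n) : c * x ∈ Jmod K n := by
  induction hx using Submodule.span_induction with
  | mem y h =>
    obtain ⟨r, hr, u, v, rfl⟩ := h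
    exact Submodule.subset_span ⟨r, hr, c * u, v, by simp only [mul_assoc]⟩
  | zero => rw [mul_zero]; exact Submodule.zero_mem _
  | add y z _ _ hy hz => rw [mul_add]; exact Submodule.add_mem _ hy hz
  | smul a y _ hy => rw [mul_smul_comm]; exact Submodule.smul_mem _ a hy

lemma rel_sub_mem {x y : FA K n} (h : RingQuot.Rel (DRel K n) x y) : x - y ∈ Jmod K n := by
  induction h with
  | of h =>
    obtain ⟨hx, rfl⟩ := h
    rw [sub_zero]
    exact Submodule.subset_span ⟨_, hx, 1, 1, by rw [one_mul, mul_one]⟩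
  | add_left h ih => simpa using ih
  | mul_left h ih => rw [← sub_mul]; exact Jmod_mul_right K n _ ih
  | mul_right h ih => rw [← mul_sub]; exact Jmod_mul_left K n _ ih

lemma eqvGen_sub_mem {x y : FA K n}
    (h : Relation.EqvGen (RingQuot.Rel (DRel K n)) x y) : x - y ∈ Jmod K n := by
  induction h with
  | rel a b hab => exact rel_sub_mem K n hab
  | refl a => simp only [sub_self]; exact Submodule.zero_mem (Jmod K n)
  | symm a b _ ih => simpa using Submodule.neg_mem _ ih
  | trans a b c _ _ ih1 ih2 => simpa using Submodule.add_mem _ ih1 ih2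

lemma dPi_eq_sub_mem {x y : FA K n} (h : dPi K n x = dPi K n y) : x - y ∈ Jmod K n := by
  have h1 : RingQuot.mkRingHom (DRel K n) x = RingQuot.mkRingHom (DRel K n) y := by
    rw [← RingQuot.mkAlgHom_coe K (DRel K n)]
    exact h
  rw [RingQuot.mkRingHom_def] at h1
  have h2 : Quot.mk (RingQuot.Rel (DRel K n)) x = Quot.mk (RingQuot.Rel (DRel K n)) y :=
    congrArg RingQuot.toQuot h1
  exact eqvGen_sub_mem K n (Quot.eqvGen_exact h2)

lemma phi_Jmod {x : FA K n} (hx : x ∈ Jmod K n) : phi K n x = 0 := by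
  induction hx using Submodule.span_induction with
  | mem y h =>
    obtain ⟨r, hr, u, v, rfl⟩ := h
    calc phi K n (u * r * v) = phi K n (u * (r * v)) := by rw [mul_assoc]
    _ = phi K n ((r * v) * u) := phi_mul_comm K n _ _
    _ = phi K n (r * (v * u)) := by rw [mul_assoc]
    _ = 0 := phi_dRel K n hr _
  | zero => exact map_zero _
  | add y z _ _ hy hz => rw [map_add, hy, hz, add_zero]
  | smul a y _ hy => rw [map_smul, hy, smul_zero]

lemma phi_commutator {x : FA K n} (hx : x ∈ commutatorSubspace K (FA K n)) :
    phi K n x = 0 := by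
  induction hx using Submodule.span_induction with
  | mem y h =>
    obtain ⟨a, b, rfl⟩ := h
    rw [map_sub, phi_mul_comm, sub_self]
  | zero => exact map_zero _
  | add y z _ _ hy hz => rw [map_add, hy, hz, add_zero]
  | smul a y _ hy => rw [map_smul, hy, smul_zero]

end Jmachine


/-- in the nonstandard algebra `D(m)` (characteristic `2`, `m ≥ 2`),
the element `α²` does not belong to the commutator subspace `K(D(m))`; consequently
`α ∉ T_1(D(m)) = { x | x² ∈ K(D(m)) }`. -/
theorem dAlg_alpha_sq_not_in_commutator {K : Type*} [Field K] [IsAlgClosed K]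
    [CharP K 2] (m : ℕ) [NeZero m] (hm : 2 ≤ m) :
    (dPi K m (ga K m)) ^ 2 ∉ commutatorSubspace K (DAlg K m) := by
  intro h
  have h2 : dPi K m (ga K m ^ 2) ∈ commutatorSubspace K (DAlg K m) := by
    rwa [← map_pow] at h
  have hmap : commutatorSubspace K (DAlg K m)
      = (commutatorSubspace K (FA K m)).map (dPi K m).toLinearMap := by
    unfold commutatorSubspace
    rw [Submodule.map_span]
    congr 1
    ext x
    simp only [Set.mem_image, Set.mem_setOf_eq]
    constructor
    · rintro ⟨A, B, rfl⟩
      obtain ⟨a, ha⟩ := RingQuot.mkAlgHom_surjective K (DRel K m) A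
      obtain ⟨b, hb⟩ := RingQuot.mkAlgHom_surjective K (DRel K m) B
      refine ⟨a * b - b * a, ⟨a, b, rfl⟩, ?_⟩
      simp only [AlgHom.toLinearMap_apply, dPi, map_sub, map_mul, ha, hb]
    · rintro ⟨y, ⟨a, b, rfl⟩, rfl⟩
      refine ⟨dPi K m a, dPi K m b, ?_⟩
      simp only [AlgHom.toLinearMap_apply, map_sub, map_mul]
  rw [hmap] at h2
  obtain ⟨w, hw, hweq⟩ := h2
  have hweq' : dPi K m (ga K m ^ 2) = dPi K m w := by
    rw [← hweq]; rfl
  have hker : ga K m ^ 2 - w ∈ Jmod K m := dPi_eq_sub_mem K m hweq'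
  have hzero : phi K m (ga K m ^ 2) = 0 := by
    have e1 := phi_Jmod K m hker
    have e2 := phi_commutator K m hw
    rw [map_sub, e2, sub_zero] at e1
    exact e1
  have hone : phi K m (ga K m ^ 2) = 1 := by
    have hgw : ga K m ^ 2 = wordProd K m [DeltaGen.a, DeltaGen.a] := by
      rw [pow_two]
      simp [ga, wordProd]
    rw [hgw, phi_wordProd, DAuxL.fval_aa_one]
  exact one_ne_zero (α := K) (by rw [← hone, hzero])
end
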